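/- Let a,b>0, 3/2<p<3, p+2p^2/3<q<3p/(3-p), A≥0, B>0. Define h(t) = (a/p)t^p A + (b/(2p))t^{2p} A^2 - (1/q) t^{3(q-p)/p} B for t>0, where A>0. Then h has a unique critical point t_0 >0 on (0,∞), which is its global maximum; moreover t_0 < 1 if and only if a A + b A^2 - (3(q-p)/(pq)) B < 0, and t_0 = 1 if and only if a A + b A^2 - (3(q-p)/(pq)) B = 0. -/

import Mathlib

/-!
With `r = 3(q-p)/p` one has `h'(t) = t^(r-1) g(t)`, where
`g(t) = aA t^(p-r) + bA² t^(2p-r) - 3(q-p)/(pq) B`. The condition `q > p + 2p²/3` means `2p < r`,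
so both exponents of `g` are negative: `g` decreases strictly from `+∞` at `0⁺` to `-3(q-p)/(pq) B < 0`
at `+∞`. Its unique zero `t₀` is the unique critical point of `h`, `h` increases before `t₀` and
decreases after it, and `t₀` compares with `1` as `g(1) = aA + bA² - 3(q-p)/(pq) B` compares with `0`.
-/

open Real Set Filter
open scoped Topology

noncomputable section

section NegPowerSum

variable {α β c e₁ e₂ : ℝ}

lemma strictAntiOn_negPowerSum (hα : 0 < α) (hβ : 0 ≤ β) (he₁ : e₁ < 0) (he₂ : e₂ ≤ 0) :
    StrictAntiOn (fun t => α * t ^ e₁ + β * t ^ e₂ - c) (Ioi 0) := by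
  intro x hx y _ hxy
  have h₁ := mul_lt_mul_of_pos_left (rpow_lt_rpow_of_neg hx hxy he₁) hα
  have h₂ := mul_le_mul_of_nonneg_left (rpow_le_rpow_of_nonpos hx hxy.le he₂) hβ
  dsimp only
  linarith

lemma continuousOn_negPowerSum :
    ContinuousOn (fun t => α * t ^ e₁ + β * t ^ e₂ - c) (Ioi 0) := by
  have hpow (e : ℝ) : ContinuousOn (fun t : ℝ => t ^ e) (Ioi 0) :=
    continuousOn_id.rpow_const fun t ht => Or.inl (ne_of_gt ht)
  exact (((hpow e₁).const_smul α).add ((hpow e₂).const_smul β)).sub continuousOn_const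

lemma exists_negPowerSum_eq_zero (hα : 0 < α) (hβ : 0 ≤ β) (hc : 0 < c) (he₁ : e₁ < 0)
    (he₂ : e₂ < 0) : ∃ t, 0 < t ∧ α * t ^ e₁ + β * t ^ e₂ - c = 0 := by
  have hpow_atTop (e : ℝ) (he : e < 0) : Tendsto (fun t : ℝ => t ^ e) atTop (𝓝 0) := by
    simpa using tendsto_rpow_neg_atTop (neg_pos.2 he)
  have hatTop : Tendsto (fun t : ℝ => α * t ^ e₁ + β * t ^ e₂ - c) atTop (𝓝 (-c)) := by
    simpa using (((hpow_atTop e₁ he₁).const_mul α).add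
      ((hpow_atTop e₂ he₂).const_mul β)).sub_const c
  have hnearZero : Tendsto (fun t : ℝ => α * t ^ e₁ + β * t ^ e₂ - c) (𝓝[>] 0) atTop := by
    refine tendsto_atTop_mono' _ ?_ (tendsto_atTop_add_const_right _ (-c)
      ((tendsto_rpow_neg_nhdsGT_zero he₁).const_mul_atTop hα))
    filter_upwards [self_mem_nhdsWithin] with t ht
    have : 0 ≤ β * t ^ e₂ := mul_nonneg hβ (rpow_nonneg (le_of_lt ht) _)
    linarith
  exact isPreconnected_Ioi.intermediate_value_Ioi (l₂ := 𝓝[>] 0)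
    (le_principal_iff.2 (Ioi_mem_atTop 0)) inf_le_right continuousOn_negPowerSum hatTop hnearZero
    (neg_neg_of_pos hc)

end NegPowerSum

lemma isMaxOn_Ioi_of_hasDerivAt {f f' : ℝ → ℝ} {l t₀ : ℝ} (ht₀ : l < t₀)
    (hf : ∀ t ∈ Ioi l, HasDerivAt f (f' t) t)
    (hpos : ∀ t ∈ Ioo l t₀, 0 < f' t) (hneg : ∀ t ∈ Ioi t₀, f' t < 0) :
    IsMaxOn f (Ioi l) t₀ := by
  have hcont : ContinuousOn f (Ioi l) := fun t ht => (hf t ht).continuousAt.continuousWithinAt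
  have hmono : StrictMonoOn f (Ioc l t₀) :=
    strictMonoOn_of_deriv_pos (convex_Ioc l t₀) (hcont.mono Ioc_subset_Ioi_self) fun t ht => by
      rw [interior_Ioc] at ht
      exact (hf t ht.1).deriv ▸ hpos t ht
  have hanti : StrictAntiOn f (Ici t₀) :=
    strictAntiOn_of_deriv_neg (convex_Ici t₀) (hcont.mono (Ici_subset_Ioi.2 ht₀)) fun t ht => by
      rw [interior_Ici] at ht
      exact (hf t (ht₀.trans ht)).deriv ▸ hneg t ht
  intro t ht
  rcases le_total t t₀ with htt₀ | ht₀t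
  · exact hmono.monotoneOn ⟨ht, htt₀⟩ ⟨ht₀, le_rfl⟩ htt₀
  · exact hanti.antitoneOn self_mem_Ici ht₀t ht₀t


def rescaledPohozaev (a b p q A B t : ℝ) : ℝ :=
  a * A * t ^ (p - 3*(q-p)/p) + b * A^2 * t ^ (2*p - 3*(q-p)/p) - 3*(q-p)/(p*q) * B

lemma hasDerivAt_fiberingMap (a b A B : ℝ) {p q t : ℝ} (hp : p ≠ 0) (ht : 0 < t) :
    HasDerivAt (fun t => a/p * t^p * A + b/(2*p) * t^(2*p) * A^2 - 1/q * t^(3*(q-p)/p) * B)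
      (t ^ (3*(q-p)/p - 1) * rescaledPohozaev a b p q A B t) t := by
  have hpow (e : ℝ) := hasDerivAt_rpow_const (x := t) (p := e) (Or.inl ht.ne')
  refine ((((hpow p).const_mul (a/p)).mul_const A).add
    (((hpow (2*p)).const_mul (b/(2*p))).mul_const (A^2))).sub
    (((hpow (3*(q-p)/p)).const_mul (1/q)).mul_const B) |>.congr_deriv ?_
  have hsplit (e : ℝ) : t ^ (e - 1) = t ^ (3*(q-p)/p - 1) * t ^ (e - 3*(q-p)/p) := by
    rw [← rpow_add ht]; ring_nf
  rw [rescaledPohozaev, hsplit p, hsplit (2*p)]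
  field_simp

theorem stmt4 (a b p q A B : ℝ) (ha : 0 < a) (hb : 0 < b)
    (hp1 : 3/2 < p) (hq1 : p + 2*p^2/3 < q)
    (hA : 0 < A) (hB : 0 < B) :
    let h : ℝ → ℝ := fun t => a/p * t^p * A + b/(2*p) * t^(2*p) * A^2
      - 1/q * t^(3*(q-p)/p) * B
    ∃ t0 : ℝ, 0 < t0 ∧ deriv h t0 = 0 ∧ (∀ s, 0 < s → deriv h s = 0 → s = t0) ∧
      (∀ t, 0 < t → h t ≤ h t0) ∧
      (t0 < 1 ↔ a*A + b*A^2 - (3*(q-p)/(p*q))*B < 0) ∧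
      (t0 = 1 ↔ a*A + b*A^2 - (3*(q-p)/(p*q))*B = 0) := by
  intro h
  have hp : 0 < p := by linarith
  have hpq : p < q := by nlinarith
  have he₂ : 2*p - 3*(q-p)/p < 0 := by
    rw [sub_neg, lt_div_iff₀ hp]; nlinarith
  have he₁ : p - 3*(q-p)/p < 0 := by linarith
  have hc : 0 < 3*(q-p)/(p*q) * B := mul_pos (div_pos (by linarith) (by nlinarith)) hB
  set g := rescaledPohozaev a b p q A B
  have hg : StrictAntiOn g (Ioi 0) :=
    strictAntiOn_negPowerSum (by positivity) (by positivity) he₁ he₂.le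
  obtain ⟨t0, ht0, hgt0⟩ : ∃ t0, 0 < t0 ∧ g t0 = 0 :=
    exists_negPowerSum_eq_zero (by positivity) (by positivity) hc he₁ he₂
  have hh (t : ℝ) (ht : t ∈ Ioi 0) : HasDerivAt h (t ^ (3*(q-p)/p - 1) * g t) t :=
    hasDerivAt_fiberingMap a b A B hp.ne' ht
  have hcrit (s : ℝ) (hs : s ∈ Ioi 0) : deriv h s = 0 ↔ s = t0 := by
    rw [(hh s hs).deriv, mul_eq_zero_iff_left (rpow_pos_of_pos hs _).ne', ← hgt0]
    exact hg.injOn.eq_iff hs ht0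
  have hg1 : g 1 = a*A + b*A^2 - (3*(q-p)/(p*q))*B := by simp [g, rescaledPohozaev]
  refine ⟨t0, ht0, (hcrit t0 ht0).2 rfl, fun s hs => (hcrit s hs).1,
    isMaxOn_iff.1 (isMaxOn_Ioi_of_hasDerivAt ht0 hh ?_ ?_), ?_, ?_⟩
  · exact fun t ht => mul_pos (rpow_pos_of_pos ht.1 _) (hgt0 ▸ hg ht.1 ht0 ht.2)
  · exact fun t ht => mul_neg_of_pos_of_neg (rpow_pos_of_pos (ht0.trans ht) _)
      (hgt0 ▸ hg ht0 (ht0.trans ht) ht)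
  · rw [← hg1, ← hgt0, hg.lt_iff_gt (mem_Ioi.2 one_pos) ht0]
  · rw [← hg1, ← hgt0, hg.eq_iff_eq (mem_Ioi.2 one_pos) ht0]
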